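/- The map H_III^A(α,β): (x,y) ↦ ((y/α)Q, (x/β)Q) with Q = (αx+βy)/(x+y) satisfies the Yang–Baxter relation on all triples where the relevant denominators are nonzero and α,β ≠ 0. -/

import Mathlib

/-!
`HIIIAMap a b` is homogeneous of degree one, and on a pair written over a common denominator it
acts polynomially: `(p / t, q / t) ↦ (b q (a p + b q), a p (a p + b q)) / (a b (p + q) t)`.
Keeping all three coordinates over one common denominator, each side of the Yang–Baxter relation
becomes a triple of polynomials over a polynomial denominator, and the relation is a polynomial
identity.
-/

open Function

variable {K : Type*} [Field K]

/-- lift a map on pairs to act on coordinates 1,2 of a triple -/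
def lift12 {X : Type*} (f : X × X → X × X) : X × X × X → X × X × X :=
  fun p => ((f (p.1, p.2.1)).1, (f (p.1, p.2.1)).2, p.2.2)

/-- lift to coordinates 1,3 -/
def lift13 {X : Type*} (f : X × X → X × X) : X × X × X → X × X × X :=
  fun p => ((f (p.1, p.2.2)).1, p.2.1, (f (p.1, p.2.2)).2)

/-- lift to coordinates 2,3 -/
def lift23 {X : Type*} (f : X × X → X × X) : X × X × X → X × X × X :=
  fun p => (p.1, (f (p.2.1, p.2.2)).1, (f (p.2.1, p.2.2)).2)

def HIIIAMap (a b : K) : K × K → K × K :=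
  fun p => ((p.2 / a) * ((a*p.1 + b*p.2)/(p.1 + p.2)), (p.1 / b) * ((a*p.1 + b*p.2)/(p.1 + p.2)))

theorem HIIIAMap_div_div {a b p q t : K} (ha : a ≠ 0) (hb : b ≠ 0) (hpq : p + q ≠ 0) :
    HIIIAMap a b (p / t, q / t) =
      (b * q * (a * p + b * q) / (a * b * (p + q) * t),
        a * p * (a * p + b * q) / (a * b * (p + q) * t)) := by
  rcases eq_or_ne t 0 with rfl | ht
  · simp [HIIIAMap]
  · simp only [HIIIAMap, Prod.mk.injEq]
    constructor <;> field_simp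

theorem lift12_HIIIAMap_div {a b p q r t : K} (ha : a ≠ 0) (hb : b ≠ 0) (hpq : p + q ≠ 0) :
    lift12 (HIIIAMap a b) (p / t, q / t, r / t) =
      (b * q * (a * p + b * q) / (a * b * (p + q) * t),
        a * p * (a * p + b * q) / (a * b * (p + q) * t),
        a * b * (p + q) * r / (a * b * (p + q) * t)) := by
  simp only [lift12, HIIIAMap_div_div ha hb hpq,
    mul_div_mul_left _ t (mul_ne_zero (mul_ne_zero ha hb) hpq)]

theorem lift13_HIIIAMap_div {a b p q r t : K} (ha : a ≠ 0) (hb : b ≠ 0) (hpr : p + r ≠ 0) :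
    lift13 (HIIIAMap a b) (p / t, q / t, r / t) =
      (b * r * (a * p + b * r) / (a * b * (p + r) * t),
        a * b * (p + r) * q / (a * b * (p + r) * t),
        a * p * (a * p + b * r) / (a * b * (p + r) * t)) := by
  simp only [lift13, HIIIAMap_div_div ha hb hpr,
    mul_div_mul_left _ t (mul_ne_zero (mul_ne_zero ha hb) hpr)]

theorem lift23_HIIIAMap_div {a b p q r t : K} (ha : a ≠ 0) (hb : b ≠ 0) (hqr : q + r ≠ 0) :
    lift23 (HIIIAMap a b) (p / t, q / t, r / t) =
      (a * b * (q + r) * p / (a * b * (q + r) * t),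
        b * r * (a * q + b * r) / (a * b * (q + r) * t),
        a * q * (a * q + b * r) / (a * b * (q + r) * t)) := by
  simp only [lift23, HIIIAMap_div_div ha hb hqr,
    mul_div_mul_left _ t (mul_ne_zero (mul_ne_zero ha hb) hqr)]

theorem add_ne_zero_of_div_add_div_ne_zero {p q t : K} (h : p / t + q / t ≠ 0) : p + q ≠ 0 :=
  fun hpq => h (by rw [← add_div, hpq, zero_div])

theorem triple_div_eq_div {p q r t p' q' r' t' : K} (ht : t ≠ 0) (ht' : t' ≠ 0)
    (hp : p * t' = p' * t) (hq : q * t' = q' * t) (hr : r * t' = r' * t) :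
    (p / t, q / t, r / t) = (p' / t', q' / t', r' / t') := by
  rw [Prod.mk.injEq, Prod.mk.injEq, div_eq_div_iff ht ht', div_eq_div_iff ht ht',
    div_eq_div_iff ht ht']
  exact ⟨hp, hq, hr⟩

theorem yangBaxter_HIIIA (a1 a2 a3 x y z : K)
    (hp1 : a1 ≠ 0) (hp2 : a2 ≠ 0) (hp3 : a3 ≠ 0)
    (h1 : (x + y) ≠ 0)
    (h2 : ((lift12 (HIIIAMap a1 a2) (x, y, z)).1 + (lift12 (HIIIAMap a1 a2) (x, y, z)).2.2) ≠ 0)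
    (h3 : ((lift13 (HIIIAMap a1 a3) (lift12 (HIIIAMap a1 a2) (x, y, z))).2.1 + (lift13 (HIIIAMap a1 a3) (lift12 (HIIIAMap a1 a2) (x, y, z))).2.2) ≠ 0)
    (h4 : (y + z) ≠ 0)
    (h5 : ((lift23 (HIIIAMap a2 a3) (x, y, z)).1 + (lift23 (HIIIAMap a2 a3) (x, y, z)).2.2) ≠ 0)
    (h6 : ((lift13 (HIIIAMap a1 a3) (lift23 (HIIIAMap a2 a3) (x, y, z))).1 + (lift13 (HIIIAMap a1 a3) (lift23 (HIIIAMap a2 a3) (x, y, z))).2.1) ≠ 0) :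
    lift23 (HIIIAMap a2 a3) (lift13 (HIIIAMap a1 a3) (lift12 (HIIIAMap a1 a2) (x, y, z))) =
      lift12 (HIIIAMap a1 a2) (lift13 (HIIIAMap a1 a3) (lift23 (HIIIAMap a2 a3) (x, y, z))) := by
  have hxyz : ((x, y, z) : K × K × K) = (x / 1, y / 1, z / 1) := by simp only [div_one]
  rw [hxyz] at h2 h3 h5 h6 ⊢
  rw [lift12_HIIIAMap_div hp1 hp2 h1] at h2 h3 ⊢
  have hs2 := add_ne_zero_of_div_add_div_ne_zero h2
  rw [lift13_HIIIAMap_div hp1 hp3 hs2] at h3 ⊢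
  have hs3 := add_ne_zero_of_div_add_div_ne_zero h3
  rw [lift23_HIIIAMap_div hp2 hp3 hs3]
  rw [lift23_HIIIAMap_div hp2 hp3 h4] at h5 h6 ⊢
  have hs5 := add_ne_zero_of_div_add_div_ne_zero h5
  rw [lift13_HIIIAMap_div hp1 hp3 hs5] at h6 ⊢
  have hs6 := add_ne_zero_of_div_add_div_ne_zero h6
  rw [lift12_HIIIAMap_div hp1 hp2 hs6]
  apply triple_div_eq_div (by simp [*]) (by simp [*]) <;> ring
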